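/- Let i ∈ {0,…,n}, let G = 𝒫ⁿ_{S_i⇌0}, and let Ḡ be the network on the species of G together with one new species S_{n+1}, whose reactions are those of G together with S_n+E→S_{n+1}+E and S_{n+1}+F→S_n+F. Fix rates κ* for G and a > 0, and let κ̄* assign rate κ*_{y→y'} to every reaction of G and rate a to each of the two new reactions. If x' is a positive steady state of the mass action system (G,κ*), then the point x̄' defined by x̄'_{S_{n+1}} = x'_{S_n} x'_E / x'_F and x̄'_X = x'_X for every species X of G is a positive steady state of (Ḡ, κ̄*). Moreover x̄' satisfies the same totals as x': x̄'_E + Σ_{j=0}^{n−1} x̄'_{ES_j} = x'_E + Σ_{j=0}^{n−1} x'_{ES_j} and x̄'_F + Σ_{j=1}^{n} x̄'_{FS_j} = x'_F + Σ_{j=1}^{n} x'_{FS_j}. -/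
import Mathlib


/-- A reaction `y → y'` is a pair of complexes, each a vector of
nonnegative integer coefficients indexed by the species: the source and the target. -/
abbrev Reaction (S : Type) : Type := (S → ℕ) × (S → ℕ)

section General

variable {S : Type} [Fintype S] [DecidableEq S]

/-- The complex consisting of a single copy of species `s`. -/
def unitC (s : S) : S → ℕ := fun t => if t = s then 1 else 0

/-- The complex `a + b`. -/
def pairC (a b : S) : S → ℕ := fun t => (if t = a then 1 else 0) + (if t = b then 1 else 0)

/-- The mass action right-hand side `f_κ` of a network `R` with rates `κ`. -/
def massAction (R : Finset (Reaction S)) (κ : Reaction S → ℝ) (x : S → ℝ) : S → ℝ :=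
  fun s => ∑ r ∈ R, κ r * (∏ t, x t ^ r.1 t) * ((r.2 s : ℝ) - (r.1 s : ℝ))

/-- The stoichiometric subspace of a network: the span of its reaction vectors. -/
def stoichSubspace (R : Finset (Reaction S)) : Submodule ℝ (S → ℝ) :=
  Submodule.span ℝ ((fun r : Reaction S => fun s => ((r.2 s : ℝ) - (r.1 s : ℝ))) '' ↑R)

/-- A positive steady state of the mass action system `(R, κ)`. -/
def isPosSteadyState (R : Finset (Reaction S)) (κ : Reaction S → ℝ) (x : S → ℝ) : Prop :=
  (∀ s, 0 < x s) ∧ massAction R κ x = 0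

/-- A steady state is nondegenerate if the kernel of the Jacobian of the mass action
right-hand side intersects the stoichiometric subspace trivially. -/
def nondegenerate (R : Finset (Reaction S)) (κ : Reaction S → ℝ) (x : S → ℝ) : Prop :=
  ∀ v ∈ stoichSubspace R, fderiv ℝ (massAction R κ) x v = 0 → v = 0

/-- A network admits nondegenerate multistationarity if for some positive rates there are
two distinct nondegenerate positive steady states in the same stoichiometric
compatibility class. -/
def admitsNondegMultistationarity (R : Finset (Reaction S)) : Prop :=
  ∃ κ : Reaction S → ℝ, (∀ r ∈ R, 0 < κ r) ∧
    ∃ x y : S → ℝ, x ≠ y ∧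
      isPosSteadyState R κ x ∧ isPosSteadyState R κ y ∧
      nondegenerate R κ x ∧ nondegenerate R κ y ∧
      y - x ∈ stoichSubspace R

/-- The inflow reaction `0 → s`. -/
def inflow (s : S) : Reaction S := (fun _ => 0, unitC s)

/-- The outflow reaction `s → 0`. -/
def outflow (s : S) : Reaction S := (unitC s, fun _ => 0)

/-- The open network on `E`: add inflow and outflow reactions for every species of `E`. -/
def openOn (R : Finset (Reaction S)) (E : Finset S) : Finset (Reaction S) :=
  R ∪ E.image inflow ∪ E.image outflow

/-- A conservation law: a vector orthogonal to the stoichiometric subspace. -/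
def conservationLaw (R : Finset (Reaction S)) (w : S → ℝ) : Prop :=
  ∀ v ∈ stoichSubspace R, ∑ s, w s * v s = 0

/-- A set `E` of species is independently conserved in `R` if there are conservation laws
`L e` for `e ∈ E` such that `L e` has a nonzero coordinate at `e` and zero coordinate at
`e` for every other `L e'`, `e' ∈ E`. -/
def IndepConserved (R : Finset (Reaction S)) (E : Finset S) : Prop :=
  ∃ L : S → (S → ℝ), ∀ e ∈ E,
    conservationLaw R (L e) ∧ L e e ≠ 0 ∧ ∀ e' ∈ E, e' ≠ e → L e' e = 0

/-- A species is closed in `R` if neither its inflow nor its outflow is a reaction of `R`. -/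
def ClosedIn (R : Finset (Reaction S)) (s : S) : Prop :=
  inflow s ∉ R ∧ outflow s ∉ R

/-- Projection of a complex onto the coordinates outside `E`. -/
def projC (E : Finset S) (y : S → ℕ) : {s : S // s ∉ E} → ℕ := fun s => y s.val

/-- Projection of a reaction onto the coordinates outside `E`. -/
def projR (E : Finset S) (r : Reaction S) : Reaction {s : S // s ∉ E} :=
  (projC E r.1, projC E r.2)

/-- The projected network `G₋E` on the species outside `E`: project all reactions and
remove self-loops. -/
def projNet (R : Finset (Reaction S)) (E : Finset S) : Finset (Reaction {s : S // s ∉ E}) :=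
  (R.image (projR E)).filter fun r => r.1 ≠ r.2

/-- Inclusion of a reaction on the species of `E` into a reaction on all of `S`. -/
def inclR (E : Finset S) (r : Reaction {s : S // s ∈ E}) : Reaction S :=
  (fun s => if h : s ∈ E then r.1 ⟨s, h⟩ else 0,
   fun s => if h : s ∈ E then r.2 ⟨s, h⟩ else 0)

/-- `R` has at most `l` positive steady states in each stoichiometric compatibility class,
for every choice of positive reaction rates: there is no injective family of `l + 1`
positive steady states lying pairwise in the same compatibility class. -/
def atMostPosSS (R : Finset (Reaction S)) (l : ℕ) : Prop :=
  ∀ κ : Reaction S → ℝ, (∀ r ∈ R, 0 < κ r) →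
    ∀ f : Fin (l + 1) → (S → ℝ),
      (∀ j, isPosSteadyState R κ (f j)) →
      (∀ j k, f k - f j ∈ stoichSubspace R) →
      ¬ Function.Injective f

/-- Monostationarity: at most one positive steady state in each stoichiometric
compatibility class, for every choice of positive rates. -/
def monostationary (R : Finset (Reaction S)) : Prop :=
  atMostPosSS R 1

end General

/-- Species of the sequential `n`-site phosphorylation–dephosphorylation cycle:
the enzymes `E`, `F`, the substrates `S i` for `i = 0, …, n`, and the intermediates
`ES i` for `i = 0, …, n-1` and `FS i` (denoting `FS_{i+1}`) for `i = 0, …, n-1`. -/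
inductive PS (n : ℕ) : Type
  | E : PS n
  | F : PS n
  | S : Fin (n + 1) → PS n
  | ES : Fin n → PS n
  | FS : Fin n → PS n
deriving DecidableEq, Fintype

/-- The sequential `n`-site phosphorylation–dephosphorylation cycle `𝒫ⁿ`, with the `6n`
reactions `S_i + E ⇌ ES_i`, `ES_i → S_{i+1} + E` for `i = 0, …, n-1` and
`S_i + F ⇌ FS_i`, `FS_i → S_{i-1} + F` for `i = 1, …, n`. -/
def Pcycle (n : ℕ) : Finset (Reaction (PS n)) :=
  (Finset.univ.image fun i : Fin n => (pairC (PS.S i.castSucc) PS.E, unitC (PS.ES i))) ∪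
  (Finset.univ.image fun i : Fin n => (unitC (PS.ES i), pairC (PS.S i.castSucc) PS.E)) ∪
  (Finset.univ.image fun i : Fin n => (unitC (PS.ES i), pairC (PS.S i.succ) PS.E)) ∪
  (Finset.univ.image fun i : Fin n => (pairC (PS.S i.succ) PS.F, unitC (PS.FS i))) ∪
  (Finset.univ.image fun i : Fin n => (unitC (PS.FS i), pairC (PS.S i.succ) PS.F)) ∪
  (Finset.univ.image fun i : Fin n => (unitC (PS.FS i), pairC (PS.S i.castSucc) PS.F))

/-- Extend a reaction of `𝒫ⁿ` (on species `PS n`) to the species set `Option (PS n)`,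
where `none` denotes the new species `S_{n+1}`. -/
def liftR (n : ℕ) (r : Reaction (PS n)) : Reaction (Option (PS n)) :=
  (fun o => Option.elim o 0 r.1, fun o => Option.elim o 0 r.2)

/-- The new reaction `S_n + E → S_{n+1} + E`. -/
def newFwd (n : ℕ) : Reaction (Option (PS n)) :=
  (pairC (some (PS.S (Fin.last n))) (some PS.E), pairC none (some PS.E))

/-- The new reaction `S_{n+1} + F → S_n + F`. -/
def newBwd (n : ℕ) : Reaction (Option (PS n)) :=
  (pairC none (some PS.F), pairC (some (PS.S (Fin.last n))) (some PS.F))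

/-- The extended network `Ḡ`: the reactions of `G = 𝒫ⁿ_{S_i⇌0}` together with
`S_n + E → S_{n+1} + E` and `S_{n+1} + F → S_n + F`. -/
def barNet (n : ℕ) (i : Fin (n + 1)) : Finset (Reaction (Option (PS n))) :=
  (openOn (Pcycle n) {PS.S i}).image (liftR n) ∪ {newFwd n, newBwd n}

/-- The extension `x̄` of a state `x` of `G`, setting
`x̄_{S_{n+1}} = x_{S_n} · x_E / x_F` and `x̄_X = x_X` on the other species. -/
noncomputable def extendState (n : ℕ) (x : PS n → ℝ) : Option (PS n) → ℝ :=
  fun o => Option.elim o (x (PS.S (Fin.last n)) * x PS.E / x PS.F) x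

section Helpers

variable {S : Type} [Fintype S] [DecidableEq S]

lemma prod_unitC (x : S → ℝ) (s : S) : ∏ t, x t ^ unitC s t = x s := by
  have : ∀ t, x t ^ unitC s t = if t = s then x s else 1 := by
    intro t
    by_cases h : t = s <;> simp [unitC, h]
  simp [this]

lemma prod_pairC (x : S → ℝ) (a b : S) : ∏ t, x t ^ pairC a b t = x a * x b := by
  have : ∀ t, pairC a b t = unitC a t + unitC b t := fun t => rfl
  simp only [this, pow_add, Finset.prod_mul_distrib, prod_unitC]

lemma liftR_inj (n : ℕ) : Function.Injective (liftR n) := by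
  intro r s h
  have h1 := congrArg Prod.fst h
  have h2 := congrArg Prod.snd h
  ext t
  · exact congrFun h1 (some t)
  · exact congrFun h2 (some t)

lemma stoich_cancel (n : ℕ) (o : Option (PS n)) :
    (((newFwd n).2 o : ℝ) - (newFwd n).1 o) + (((newBwd n).2 o : ℝ) - (newBwd n).1 o) = 0 := by
  rcases o with _ | t <;>
    simp [newFwd, newBwd, pairC] <;> push_cast <;> ring

end Helpers

/-- If `x` is a positive steady state of `(G, κ)` with
`G = 𝒫ⁿ_{S_i⇌0}`, then `x̄` is a positive steady state of `(Ḡ, κ̄)`, where `κ̄` assigns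
the old rates to the reactions of `G` and rate `a > 0` to the two new reactions.
Moreover `x̄` satisfies the same enzyme totals as `x`. -/
theorem extend_steady_state (n : ℕ) (i : Fin (n + 1))
    (κ : Reaction (PS n) → ℝ) (hκ : ∀ r ∈ openOn (Pcycle n) {PS.S i}, 0 < κ r)
    (a : ℝ) (ha : 0 < a)
    (κbar : Reaction (Option (PS n)) → ℝ)
    (hκbar : ∀ r ∈ openOn (Pcycle n) {PS.S i}, κbar (liftR n r) = κ r)
    (hfwd : κbar (newFwd n) = a) (hbwd : κbar (newBwd n) = a)
    (x : PS n → ℝ)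
    (hx : isPosSteadyState (openOn (Pcycle n) {PS.S i}) κ x) :
    isPosSteadyState (barNet n i) κbar (extendState n x) ∧
    (extendState n x (some PS.E) + ∑ j : Fin n, extendState n x (some (PS.ES j))
      = x PS.E + ∑ j : Fin n, x (PS.ES j)) ∧
    (extendState n x (some PS.F) + ∑ j : Fin n, extendState n x (some (PS.FS j))
      = x PS.F + ∑ j : Fin n, x (PS.FS j)) := by
  obtain ⟨hxpos, hss⟩ := hx
  have hF : x PS.F ≠ 0 := ne_of_gt (hxpos _)
  set G := openOn (Pcycle n) {PS.S i} with hG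
  -- the new reactions are not lifted reactions
  have h1 : ∀ r : Reaction (PS n), liftR n r ≠ newFwd n := by
    intro r h
    have := congrFun (congrArg Prod.snd h) none
    simp [liftR, newFwd, pairC] at this
  have h2 : ∀ r : Reaction (PS n), liftR n r ≠ newBwd n := by
    intro r h
    have := congrFun (congrArg Prod.fst h) none
    simp [liftR, newBwd, pairC] at this
  have hdisj : Disjoint (G.image (liftR n)) ({newFwd n, newBwd n} : Finset _) := by
    rw [Finset.disjoint_right]
    intro r hr hr'
    rcases Finset.mem_image.mp hr' with ⟨s, _, rfl⟩
    rcases Finset.mem_insert.mp hr with h | h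
    · exact h1 s h
    · exact h2 s (Finset.mem_singleton.mp h)
  have hfb : newFwd n ≠ newBwd n := by
    intro h
    have := congrFun (congrArg Prod.fst h) none
    simp [newFwd, newBwd, pairC] at this
  -- monomial of lifted reactions
  have hmon : ∀ r : Reaction (PS n),
      ∏ o : Option (PS n), extendState n x o ^ (liftR n r).1 o = ∏ t, x t ^ r.1 t := by
    intro r
    rw [Fintype.prod_option]
    simp [liftR, extendState]
  -- monomials of the new reactions
  have hmonF : ∏ o : Option (PS n), extendState n x o ^ (newFwd n).1 o
      = x (PS.S (Fin.last n)) * x PS.E := by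
    rw [show (newFwd n).1 = pairC (some (PS.S (Fin.last n))) (some PS.E) from rfl, prod_pairC]
    rfl
  have hmonB : ∏ o : Option (PS n), extendState n x o ^ (newBwd n).1 o
      = x (PS.S (Fin.last n)) * x PS.E := by
    rw [show (newBwd n).1 = pairC (none : Option (PS n)) (some PS.F) from rfl, prod_pairC]
    show x (PS.S (Fin.last n)) * x PS.E / x PS.F * x PS.F = _
    rw [div_mul_cancel₀ _ hF]
  refine ⟨⟨?_, ?_⟩, rfl, rfl⟩
  · -- positivity
    intro o
    rcases o with _ | t
    · exact div_pos (mul_pos (hxpos _) (hxpos _)) (hxpos _)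
    · exact hxpos t
  · -- steady state
    funext o
    show (∑ r ∈ (G.image (liftR n)) ∪ {newFwd n, newBwd n},
        κbar r * (∏ t, extendState n x t ^ r.1 t) * ((r.2 o : ℝ) - (r.1 o : ℝ))) = 0
    rw [Finset.sum_union hdisj,
      Finset.sum_image (fun a _ b _ h => liftR_inj n h),
      Finset.sum_pair hfb]
    have hnew : κbar (newFwd n) * (∏ t, extendState n x t ^ (newFwd n).1 t)
          * (((newFwd n).2 o : ℝ) - (newFwd n).1 o)
        + κbar (newBwd n) * (∏ t, extendState n x t ^ (newBwd n).1 t)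
          * (((newBwd n).2 o : ℝ) - (newBwd n).1 o) = 0 := by
      rw [hfwd, hbwd, hmonF, hmonB, ← mul_add, mul_eq_zero]
      exact Or.inr (stoich_cancel n o)
    rw [hnew, add_zero]
    have hsum : ∀ r ∈ G, κbar (liftR n r) * (∏ t, extendState n x t ^ (liftR n r).1 t)
          * (((liftR n r).2 o : ℝ) - (liftR n r).1 o)
        = κ r * (∏ t, x t ^ r.1 t) * (((liftR n r).2 o : ℝ) - (liftR n r).1 o) := by
      intro r hr
      rw [hκbar r hr, hmon]
    rw [Finset.sum_congr rfl hsum]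
    rcases o with _ | t
    · simp [liftR]
    · have := congrFun hss t
      simpa [massAction, liftR] using this
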